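/- arXiv:1212.3850 — 2 statements merged into one kernel-verified Lean document; each statement's English description precedes it below -/
import Mathlib

section
/- Let N ∈ R^{m×m} be an entrywise nonnegative matrix with N^ℓ = 0, let v ∈ R^m be a nonnegative vector, and suppose a sequence of nonnegative vectors (e^t) satisfies e^{t+1} ≤ N·((1/(t+1))·∑_{τ=1}^{t} e^τ) + N·g + T^{t+1} entrywise, where g is a fixed nonnegative vector and (T^t) are nonnegative vectors. Then e^{t+1} ≤ ∑_{s=0}^{ℓ−1} N^s · T_s^{t+1} + N·(I − N)^{-1}·g entrywise, where T_0^{t+1} = T^{t+1} and T_s^{t+1} = (1/(t+1))·∑_{τ=1}^{t} T_{s−1}^{τ}. -/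
/-!
Write `A` for the time averaging `x ↦ (1 / (t + 1)) • ∑_{τ ≤ t} x^τ`. It is linear, monotone and
shrinks nonnegative constants, so averaging the recursion `e ≤ N (A e) + N g + T` gives the same
recursion for `A e`, with `A A e` and `A T` in place of `A e` and `T`. Feeding the `s`-th averaged
recursion, multiplied by the nonnegative matrix `N ^ s`, into the previous ones yields
`e ≤ ∑_{s<k} N^s (T_s + N g) + N^k A^k e`; at `k = ℓ` the last term vanishes and
`∑_{s<ℓ} N^s = (1 - N)⁻¹`.
-/

open Finset Matrix

namespace Matrix

variable {m n R : Type*} [Fintype n]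

theorem mulVec_mono_of_nonneg [Semiring R] [PartialOrder R] [IsOrderedRing R]
    {N : Matrix m n R} (hN : ∀ i j, 0 ≤ N i j) {x y : n → R} (hxy : x ≤ y) :
    N *ᵥ x ≤ N *ᵥ y :=
  fun i => sum_le_sum fun j _ => mul_le_mul_of_nonneg_left (hxy j) (hN i j)

theorem inv_one_sub_eq_geom_sum [DecidableEq n] [CommRing R] {N : Matrix n n R} {ℓ : ℕ}
    (hN : N ^ ℓ = 0) : (1 - N)⁻¹ = ∑ s ∈ range ℓ, N ^ s :=
  inv_eq_left_inv <| by rw [geom_sum_mul_neg, hN, sub_zero]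

theorem mul_inv_one_sub_mulVec [DecidableEq n] [CommRing R] {N : Matrix n n R} {ℓ : ℕ}
    (hN : N ^ ℓ = 0) (g : n → R) :
    (N * (1 - N)⁻¹) *ᵥ g = ∑ s ∈ range ℓ, N ^ s *ᵥ (N *ᵥ g) := by
  simp only [inv_one_sub_eq_geom_sum hN, mul_sum, sum_mulVec, mulVec_mulVec, ← pow_succ,
    ← pow_succ']

theorem le_sum_pow_mulVec_add_pow_mulVec [DecidableEq n] [Semiring R] [PartialOrder R]
    [IsOrderedRing R] {N : Matrix n n R} (hN : ∀ i j, 0 ≤ N i j) {u w : ℕ → n → R}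
    (h : ∀ s, u s ≤ N *ᵥ u (s + 1) + w s) (k : ℕ) :
    u 0 ≤ ∑ s ∈ range k, N ^ s *ᵥ w s + N ^ k *ᵥ u k := by
  induction k with
  | zero => simp
  | succ k ih =>
    calc u 0 ≤ ∑ s ∈ range k, N ^ s *ᵥ w s + N ^ k *ᵥ (N *ᵥ u (k + 1) + w k) :=
          ih.trans <| add_le_add_right (mulVec_mono_of_nonneg (pow_apply_nonneg hN k) (h k)) _
      _ = ∑ s ∈ range (k + 1), N ^ s *ᵥ w s + N ^ (k + 1) *ᵥ u (k + 1) := by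
          rw [mulVec_add, mulVec_mulVec, ← pow_succ, sum_range_succ]
          abel

theorem le_sum_pow_mulVec_of_pow_eq_zero [DecidableEq n] [Semiring R] [PartialOrder R]
    [IsOrderedRing R] {N : Matrix n n R} (hN : ∀ i j, 0 ≤ N i j) {ℓ : ℕ} (hNℓ : N ^ ℓ = 0)
    {u w : ℕ → n → R} (h : ∀ s, u s ≤ N *ᵥ u (s + 1) + w s) :
    u 0 ≤ ∑ s ∈ range ℓ, N ^ s *ᵥ w s := by
  simpa [hNℓ] using le_sum_pow_mulVec_add_pow_mulVec hN h ℓ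

end Matrix

section PrefixAvg

variable {M : Type*} [AddCommMonoid M] [Module ℝ M]

/-- The averaging of the paper's recursion, `T_s^{t+1} = prefixAvg T_{s-1} (t + 1)`; the value at
time `0` is never read. -/
noncomputable def prefixAvg (x : ℕ → M) : ℕ → M
  | 0 => 0
  | t + 1 => (1 / ((t : ℝ) + 1)) • ∑ τ ∈ Icc 1 t, x τ

theorem prefixAvg_add (x y : ℕ → M) (t : ℕ) :
    prefixAvg (x + y) t = prefixAvg x t + prefixAvg y t := by
  cases t <;> simp [prefixAvg, sum_add_distrib]

theorem prefixAvg_comp_linearMap (f : M →ₗ[ℝ] M) (x : ℕ → M) (t : ℕ) :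
    prefixAvg (f ∘ x) t = f (prefixAvg x t) := by
  cases t <;> simp [prefixAvg, map_sum]

variable [PartialOrder M] [IsOrderedAddMonoid M] [PosSMulMono ℝ M]

theorem prefixAvg_mono {x y : ℕ → M} (h : ∀ t, x (t + 1) ≤ y (t + 1)) (t : ℕ) :
    prefixAvg x t ≤ prefixAvg y t := by
  cases t with
  | zero => rfl
  | succ t =>
    refine smul_le_smul_of_nonneg_left (sum_le_sum fun τ hτ => ?_) (by positivity)
    obtain ⟨τ, rfl⟩ := Nat.exists_eq_add_one.mpr (mem_Icc.mp hτ).1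
    exact h τ

theorem prefixAvg_const_le {c : M} (hc : 0 ≤ c) (t : ℕ) : prefixAvg (fun _ => c) t ≤ c := by
  cases t with
  | zero => exact hc
  | succ t =>
    have hsplit : c = ((t : ℝ) / (t + 1)) • c + (1 / ((t : ℝ) + 1)) • c := by
      rw [← add_smul, ← add_div, div_self (by positivity), one_smul]
    calc prefixAvg (fun _ => c) (t + 1) = ((t : ℝ) / (t + 1)) • c := by
          simp [prefixAvg, ← Nat.cast_smul_eq_nsmul ℝ, smul_smul, div_eq_inv_mul]
      _ ≤ c := by
          nth_rw 2 [hsplit]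
          exact le_add_of_nonneg_right (smul_nonneg (by positivity) hc)

theorem prefixAvg_le_of_le (f : M →ₗ[ℝ] M) {c : M} (hc : 0 ≤ c) {x y z : ℕ → M}
    (h : ∀ t, x (t + 1) ≤ f (y (t + 1)) + c + z (t + 1)) (t : ℕ) :
    prefixAvg x t ≤ f (prefixAvg y t) + c + prefixAvg z t :=
  calc prefixAvg x t ≤ prefixAvg (f ∘ y + (fun _ => c) + z) t := prefixAvg_mono h t
    _ = f (prefixAvg y t) + prefixAvg (fun _ => c) t + prefixAvg z t := by
        rw [prefixAvg_add, prefixAvg_add, prefixAvg_comp_linearMap]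
    _ ≤ f (prefixAvg y t) + c + prefixAvg z t := by
        gcongr
        exact prefixAvg_const_le hc t

theorem iterate_prefixAvg_le (f : M →ₗ[ℝ] M) {c : M} (hc : 0 ≤ c) {x : ℕ → M}
    {z : ℕ → ℕ → M} (hz : ∀ s t, z (s + 1) (t + 1) = prefixAvg (z s) (t + 1))
    (h : ∀ t, x (t + 1) ≤ f (prefixAvg x (t + 1)) + c + z 0 (t + 1)) (s t : ℕ) :
    prefixAvg^[s] x (t + 1) ≤ f (prefixAvg^[s + 1] x (t + 1)) + c + z s (t + 1) := by
  induction s generalizing t with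
  | zero => exact h t
  | succ s ih =>
    rw [hz, Function.iterate_succ_apply', Function.iterate_succ_apply' _ (s + 1)]
    exact prefixAvg_le_of_le f hc ih (t + 1)

end PrefixAvg

theorem stmt_7_general {n : Type*} [Fintype n] [DecidableEq n]
    (N : Matrix n n ℝ) (ℓ : ℕ)
    (hNnn : ∀ i j, 0 ≤ N i j) (hNnil : N ^ ℓ = 0)
    (g : n → ℝ) (hg : ∀ i, 0 ≤ g i)
    (e : ℕ → n → ℝ)
    (T : ℕ → n → ℝ)
    (Ts : ℕ → ℕ → n → ℝ)
    (hTs0 : ∀ t, Ts 0 t = T t)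
    (hTsrec : ∀ s t : ℕ,
      Ts (s + 1) (t + 1) = (1 / ((t : ℝ) + 1)) • ∑ τ ∈ Finset.Icc 1 t, Ts s τ)
    (hrec : ∀ t : ℕ, ∀ i,
      e (t + 1) i ≤
        N.mulVec ((1 / ((t : ℝ) + 1)) • ∑ τ ∈ Finset.Icc 1 t, e τ) i
          + N.mulVec g i + T (t + 1) i) :
    ∀ t : ℕ, ∀ i,
      e (t + 1) i ≤
        (∑ s ∈ Finset.range ℓ, (N ^ s).mulVec (Ts s (t + 1))) i
          + (N * (1 - N)⁻¹).mulVec g i := by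
  intro t
  have hNg : 0 ≤ N *ᵥ g := by simpa using mulVec_mono_of_nonneg hNnn (show 0 ≤ g from hg)
  have hstep := iterate_prefixAvg_le N.mulVecLin hNg hTsrec (fun t => hTs0 (t + 1) ▸ hrec t)
  have hunroll := le_sum_pow_mulVec_of_pow_eq_zero hNnn hNnil
    (u := fun s => prefixAvg^[s] e (t + 1)) (w := fun s => N *ᵥ g + Ts s (t + 1))
    fun s => (hstep s t).trans_eq (add_assoc _ _ _)
  rw [sum_congr rfl fun s _ => mulVec_add _ _ _, sum_add_distrib,
    ← mul_inv_one_sub_mulVec hNnil, add_comm ((N * (1 - N)⁻¹) *ᵥ g)] at hunroll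
  exact hunroll

theorem stmt_7 {n : Type*} [Fintype n] [DecidableEq n]
    (N : Matrix n n ℝ) (ℓ : ℕ) (hℓ : 0 < ℓ)
    (hNnn : ∀ i j, 0 ≤ N i j) (hNnil : N ^ ℓ = 0)
    (g : n → ℝ) (hg : ∀ i, 0 ≤ g i)
    (e : ℕ → n → ℝ) (he : ∀ t i, 0 ≤ e t i)
    (T : ℕ → n → ℝ) (hT : ∀ t i, 0 ≤ T t i)
    (Ts : ℕ → ℕ → n → ℝ)
    (hTs0 : ∀ t, Ts 0 t = T t)
    (hTsrec : ∀ s t : ℕ,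
      Ts (s + 1) (t + 1) = (1 / ((t : ℝ) + 1)) • ∑ τ ∈ Finset.Icc 1 t, Ts s τ)
    (hrec : ∀ t : ℕ, ∀ i,
      e (t + 1) i ≤
        N.mulVec ((1 / ((t : ℝ) + 1)) • ∑ τ ∈ Finset.Icc 1 t, e τ) i
          + N.mulVec g i + T (t + 1) i) :
    ∀ t : ℕ, ∀ i,
      e (t + 1) i ≤
        (∑ s ∈ Finset.range ℓ, (N ^ s).mulVec (Ts s (t + 1))) i
          + (N * (1 - N)⁻¹).mulVec g i :=
  stmt_7_general N ℓ hNnn hNnil g hg e T Ts hTs0 hTsrec hrec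
end

section
/- Suppose nonnegative vectors T_s^{t+1} are defined recursively by T_0^{t+1} ≤ v/(t+1) (entrywise, for a fixed nonnegative vector v and all t ≥ 0) and T_s^{t+1} = (1/(t+1))·∑_{τ=1}^{t} T_{s−1}^{τ}. Then for all s ≥ 0 and t ≥ 0, T_s^{t+1} ≤ (v/(t+1))·∑_{u=0}^{s} (log(t+1))^u/u! entrywise. -/
/-!
Write `E_s(y) = ∑_{u ≤ s} y^u / u!`. Since `E_s' = E_s - y^s/s!`, the function `E_{s+1}(log x)` has
derivative `f_s(x) = E_s(log x) / x`, and `f_s` is antitone on `[1, ∞)` (its derivative is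
`-(log x)^s / (s! x²)`). Bounding each `f_s(τ)`, `τ ≥ 2`, by the increment of `E_{s+1} ∘ log` over
`[τ - 1, τ]` gives `∑_{τ=1}^t f_s(τ) ≤ E_{s+1}(log (t + 1))`, since `f_s(1) = E_{s+1}(log 1) = 1`.
Induction on `s` through the recursion then yields `T_s^{t+1} ≤ v f_s(t + 1)`.
-/

open Finset Real
open scoped Nat

noncomputable def expPartialSum (s : ℕ) (y : ℝ) : ℝ :=
  ∑ u ∈ range (s + 1), y ^ u / u !

lemma expPartialSum_succ (s : ℕ) (y : ℝ) :
    expPartialSum (s + 1) y = expPartialSum s y + y ^ (s + 1) / (s + 1)! :=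
  sum_range_succ _ _

lemma expPartialSum_zero_right (s : ℕ) : expPartialSum s 0 = 1 := by
  simp [expPartialSum, sum_range_succ']

lemma expPartialSum_le_expPartialSum (s : ℕ) {a b : ℝ} (ha : 0 ≤ a) (hab : a ≤ b) :
    expPartialSum s a ≤ expPartialSum s b := by
  unfold expPartialSum; gcongr

lemma hasDerivAt_expPartialSum (s : ℕ) (y : ℝ) :
    HasDerivAt (expPartialSum s) (expPartialSum s y - y ^ s / s !) y := by
  induction s with
  | zero =>
    rw [show expPartialSum 0 = fun _ ↦ 1 from funext fun y ↦ by simp [expPartialSum]]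
    simpa using hasDerivAt_const y (1 : ℝ)
  | succ s ih =>
    rw [show expPartialSum (s + 1) = _ from funext (expPartialSum_succ s)]
    refine (ih.add ((hasDerivAt_pow (s + 1) y).div_const ((s + 1)! : ℝ))).congr_deriv ?_
    rw [add_sub_cancel_right, Nat.add_sub_cancel, Nat.factorial_succ]
    push_cast
    field_simp
    ring

lemma hasDerivAt_expPartialSum_succ_log (s : ℕ) {x : ℝ} (hx : 0 < x) :
    HasDerivAt (fun x ↦ expPartialSum (s + 1) (log x)) (expPartialSum s (log x) / x) x := by
  refine ((hasDerivAt_expPartialSum (s + 1) (log x)).comp x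
    (hasDerivAt_log hx.ne')).congr_deriv ?_
  rw [expPartialSum_succ, add_sub_cancel_right, div_eq_mul_inv]

lemma hasDerivAt_expPartialSum_log_div (s : ℕ) {x : ℝ} (hx : 0 < x) :
    HasDerivAt (fun x ↦ expPartialSum s (log x) / x) (-(log x ^ s / s !) / x ^ 2) x := by
  refine (((hasDerivAt_expPartialSum s (log x)).comp x (hasDerivAt_log hx.ne')).div
    (hasDerivAt_id x) hx.ne').congr_deriv ?_
  simp only [Function.comp_apply, id]
  field_simp
  ring

lemma antitoneOn_expPartialSum_log_div (s : ℕ) :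
    AntitoneOn (fun x ↦ expPartialSum s (log x) / x) (Set.Ici 1) := by
  have hderiv (x : ℝ) (hx : 1 ≤ x) := hasDerivAt_expPartialSum_log_div s (one_pos.trans_le hx)
  refine antitoneOn_of_hasDerivWithinAt_nonpos (convex_Ici 1)
    (fun x hx ↦ (hderiv x hx).continuousAt.continuousWithinAt)
    (fun x hx ↦ (hderiv x (interior_subset hx)).hasDerivWithinAt) fun x hx ↦ ?_
  have := log_nonneg (interior_subset hx : (1 : ℝ) ≤ x)
  exact div_nonpos_of_nonpos_of_nonneg (neg_nonpos.2 (by positivity)) (by positivity)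

lemma mul_sub_le_sub_of_hasDerivAt_of_antitoneOn {F f : ℝ → ℝ} {a b : ℝ} (hab : a ≤ b)
    (hF : ∀ x ∈ Set.Icc a b, HasDerivAt F (f x) x) (hf : AntitoneOn f (Set.Icc a b)) :
    f b * (b - a) ≤ F b - F a := by
  refine (convex_Icc a b).mul_sub_le_image_sub_of_le_deriv
    (fun x hx ↦ (hF x hx).continuousAt.continuousWithinAt)
    (fun x hx ↦ (hF x (interior_subset hx)).differentiableAt.differentiableWithinAt)
    (fun x hx ↦ ?_) a (Set.left_mem_Icc.2 hab) b (Set.right_mem_Icc.2 hab) hab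
  rw [(hF x (interior_subset hx)).deriv]
  exact hf (interior_subset hx) (Set.right_mem_Icc.2 hab) (interior_subset hx).2

lemma sum_range_le_sub_of_hasDerivAt_of_antitoneOn {F f : ℝ → ℝ} {a : ℝ}
    (hF : ∀ x ∈ Set.Ici a, HasDerivAt F (f x) x) (hf : AntitoneOn f (Set.Ici a)) (m : ℕ) :
    ∑ k ∈ range m, f (a + (k + 1)) ≤ F (a + m) - F a := by
  have hstep (k : ℕ) : f (a + (k + 1)) ≤ F (a + (k + 1)) - F (a + k) := by
    have hIcc : Set.Icc (a + k) (a + (k + 1)) ⊆ Set.Ici a := fun x hx ↦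
      Set.mem_Ici.2 (le_trans (by simp) hx.1)
    simpa using mul_sub_le_sub_of_hasDerivAt_of_antitoneOn (by linarith)
      (fun x hx ↦ hF x (hIcc hx)) (hf.mono hIcc)
  calc ∑ k ∈ range m, f (a + (k + 1)) ≤ ∑ k ∈ range m, (F (a + (k + 1)) - F (a + k)) :=
        sum_le_sum fun k _ ↦ hstep k
    _ = F (a + m) - F a := by
        simpa using sum_range_sub (fun k : ℕ ↦ F (a + k)) m

lemma sum_Icc_expPartialSum_log_div_le (s t : ℕ) :
    ∑ τ ∈ Icc 1 t, expPartialSum s (log τ) / τ ≤ expPartialSum (s + 1) (log (t + 1)) := by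
  cases t with
  | zero => simp [expPartialSum_zero_right]
  | succ m =>
    have hsplit : ∑ τ ∈ Icc 1 (m + 1), expPartialSum s (log τ) / τ =
        1 + ∑ k ∈ range m, expPartialSum s (log (1 + (k + 1 : ℝ))) / (1 + (k + 1)) := by
      rw [← Ico_add_one_right_eq_Icc, sum_Ico_eq_sum_range, Nat.add_sub_cancel, sum_range_succ']
      simp [add_comm, expPartialSum_zero_right]
    have htel := sum_range_le_sub_of_hasDerivAt_of_antitoneOn
      (fun x hx ↦ hasDerivAt_expPartialSum_succ_log s (one_pos.trans_le hx))
      (antitoneOn_expPartialSum_log_div s) m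
    have hmono :
        expPartialSum (s + 1) (log (1 + m)) ≤ expPartialSum (s + 1) (log (↑(m + 1) + 1)) :=
      expPartialSum_le_expPartialSum _ (log_nonneg (by simp))
        (log_le_log (by positivity) (by push_cast; linarith))
    simp only [log_one, expPartialSum_zero_right] at htel
    linarith

theorem stmt_10_general {n : Type*}
    (v : n → ℝ) (hv : ∀ i, 0 ≤ v i)
    (T : ℕ → ℕ → n → ℝ)
    (hT0 : ∀ t : ℕ, ∀ i, T 0 (t + 1) i ≤ v i / ((t : ℝ) + 1))
    (hTrec : ∀ s t : ℕ,
      T (s + 1) (t + 1) = (1 / ((t : ℝ) + 1)) • ∑ τ ∈ Finset.Icc 1 t, T s τ) :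
    ∀ s t : ℕ, ∀ i,
      T s (t + 1) i ≤
        (v i / ((t : ℝ) + 1)) *
          ∑ u ∈ Finset.range (s + 1), (Real.log ((t : ℝ) + 1)) ^ u / (Nat.factorial u : ℝ) := by
  intro s
  induction s with
  | zero => simpa using hT0
  | succ s ih =>
    intro t i
    have hsummand : ∀ τ ∈ Icc 1 t, T s τ i ≤ v i * (expPartialSum s (log τ) / τ) := by
      intro τ hτ
      obtain ⟨k, rfl⟩ : ∃ k, τ = k + 1 := ⟨τ - 1, by grind⟩
      calc T s (k + 1) i ≤ v i / (k + 1) * expPartialSum s (log (k + 1)) := ih k i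
        _ = _ := by push_cast; ring
    calc T (s + 1) (t + 1) i = 1 / (t + 1) * ∑ τ ∈ Icc 1 t, T s τ i := by simp [hTrec]
      _ ≤ 1 / (t + 1) * (v i * ∑ τ ∈ Icc 1 t, expPartialSum s (log τ) / τ) := by
        rw [mul_sum (Icc 1 t) _ (v i)]
        exact mul_le_mul_of_nonneg_left (sum_le_sum hsummand) (by positivity)
      _ ≤ 1 / (t + 1) * (v i * expPartialSum (s + 1) (log (t + 1))) := by
        gcongr
        · exact hv i
        · exact sum_Icc_expPartialSum_log_div_le s t
      _ = v i / (t + 1) * expPartialSum (s + 1) (log (t + 1)) := by ring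

theorem stmt_10 {n : Type*} [Fintype n]
    (v : n → ℝ) (hv : ∀ i, 0 ≤ v i)
    (T : ℕ → ℕ → n → ℝ) (hTnn : ∀ s t i, 0 ≤ T s t i)
    (hT0 : ∀ t : ℕ, ∀ i, T 0 (t + 1) i ≤ v i / ((t : ℝ) + 1))
    (hTrec : ∀ s t : ℕ,
      T (s + 1) (t + 1) = (1 / ((t : ℝ) + 1)) • ∑ τ ∈ Finset.Icc 1 t, T s τ) :
    ∀ s t : ℕ, ∀ i,
      T s (t + 1) i ≤
        (v i / ((t : ℝ) + 1)) *
          ∑ u ∈ Finset.range (s + 1), (Real.log ((t : ℝ) + 1)) ^ u / (Nat.factorial u : ℝ) :=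
  stmt_10_general v hv T hT0 hTrec
end
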